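/- For all k ∈ ℤ and nonzero l ∈ ℤ, the commutator identity [a*_n(l), x*_n⁺(k)] = ([2l]_t/l) · x*_n⁺(k+l) holds in M_{2n+1}(R). -/
import Mathlib


noncomputable section

open LaurentPolynomial

/-- The base field `F = ℚ(t)`. -/
abbrev F : Type := RatFunc ℚ

/-- The Laurent polynomial ring `R = F[z, z⁻¹]`. -/
abbrev R : Type := LaurentPolynomial F

/-- The generator `t` of `ℚ(t)`. -/
def t : F := RatFunc.X

/-- `q = t²`, so that `q_n = q^{1/2} = t` for type `B_n⁽¹⁾`. -/
def q : F := t ^ 2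

/-- The quantum integer `[m]_t = (t^m − t^{−m})/(t − t^{−1})` in the base `t`. -/
def qit (m : ℤ) : F := (t ^ m - t ^ (-m)) / (t - t⁻¹)

/-- The matrix unit `E_{ab} ∈ M_N(R)` in the 1-based labels
`v_1,…,v_n,v_0,v_{n̄},…,v_{1̄}` (so `v_0 ↔ n+1`, `v_{ī} ↔ 2n+2−i`). -/
def E (N a b : ℕ) : Matrix (Fin N) (Fin N) R :=
  Matrix.of fun r s => if (r : ℕ) + 1 = a ∧ (s : ℕ) + 1 = b then (1 : R) else 0

/-- The element `(q^c z)^k ∈ R`. -/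
def zq (c k : ℤ) : R := C (q ^ (c * k)) * T k

/-- `x_n⁺(k) = (q^n z)^k [2]_t E_{n,0} + (q^{n−1}z)^k E_{0,n̄}` in `M_{2n+1}(R)`. -/
def xpB (n : ℕ) (k : ℤ) : Matrix (Fin (2*n+1)) (Fin (2*n+1)) R :=
  (zq n k * C (qit 2)) • E (2*n+1) n (n+1) + zq ((n : ℤ) - 1) k • E (2*n+1) (n+1) (n+2)

/-- `x_n⁻(k) = (q^{n−1}z)^k [2]_t E_{n̄,0} + (q^n z)^k E_{0,n}` in `M_{2n+1}(R)`. -/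
def xmB (n : ℕ) (k : ℤ) : Matrix (Fin (2*n+1)) (Fin (2*n+1)) R :=
  (zq ((n : ℤ) - 1) k * C (qit 2)) • E (2*n+1) (n+2) (n+1) + zq n k • E (2*n+1) (n+1) n

/-- `a_n(l) = ([2l]_t/l)(q^{n−1}z)^l ((E_{n,n} − q^l E_{0,0}) + (E_{0,0} − q^l E_{n̄,n̄}))`
in `M_{2n+1}(R)`. -/
def aB (n : ℕ) (l : ℤ) : Matrix (Fin (2*n+1)) (Fin (2*n+1)) R :=
  (C (qit (2 * l) / (l : F)) * zq ((n : ℤ) - 1) l) •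
    ((E (2*n+1) n n - C (q ^ l) • E (2*n+1) (n+1) (n+1)) +
     (E (2*n+1) (n+1) (n+1) - C (q ^ l) • E (2*n+1) (n+2) (n+2)))

/-- `x*_n⁺(k) = (−q^{−1})((q^{−n}z)^k [2]_t E_{0,n} + (q^{−n+1}z)^k q E_{n̄,0})`
in `M_{2n+1}(R)`. -/
def xpsB (n : ℕ) (k : ℤ) : Matrix (Fin (2*n+1)) (Fin (2*n+1)) R :=
  (-(C q⁻¹)) •
    ((zq (-(n : ℤ)) k * C (qit 2)) • E (2*n+1) (n+1) n +
     (zq (-(n : ℤ) + 1) k * C q) • E (2*n+1) (n+2) (n+1))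

/-- `a*_n(l) = ([2l]_t/l)(q^{−n+1}z)^l ((q^{−l}E_{0,0} − E_{n,n}) + (q^{−l}E_{n̄,n̄} − E_{0,0}))`
in `M_{2n+1}(R)`. -/
def asB (n : ℕ) (l : ℤ) : Matrix (Fin (2*n+1)) (Fin (2*n+1)) R :=
  (C (qit (2 * l) / (l : F)) * zq (-(n : ℤ) + 1) l) •
    ((C (q ^ (-l)) • E (2*n+1) (n+1) (n+1) - E (2*n+1) n n) +
     (C (q ^ (-l)) • E (2*n+1) (n+2) (n+2) - E (2*n+1) (n+1) (n+1)))


lemma E_mul_of_eq {N a b d : ℕ} (h1 : 1 ≤ b) (h2 : b ≤ N) :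
    E N a b * E N b d = E N a d := by
  refine Matrix.ext fun r s => ?_
  simp only [Matrix.mul_apply, E, Matrix.of_apply]
  rw [Finset.sum_eq_single (⟨b - 1, by omega⟩ : Fin N)]
  · simp only [show b - 1 + 1 = b from by omega, and_true, true_and]
    split_ifs with ha hb hb <;> simp_all
  · intro j _ hj
    rw [if_neg, zero_mul]
    rintro ⟨-, h⟩
    exact hj (Fin.ext (by simp only [Fin.val_mk]; omega))
  · simp
lemma E_mul_of_ne {N a b c d : ℕ} (h : b ≠ c) : E N a b * E N c d = 0 := by
  refine Matrix.ext fun r s => ?_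
  simp only [Matrix.mul_apply, E, Matrix.of_apply, Matrix.zero_apply]
  apply Finset.sum_eq_zero
  intro j _
  split_ifs with h1 h2 <;> simp_all

lemma hq0 : q ≠ 0 := by
  simp [q, t, RatFunc.X_ne_zero]

lemma zq_mul (c k l : ℤ) : zq c k * zq c l = zq c (k + l) := by
  unfold zq
  rw [show c * (k + l) = c * k + c * l by ring, zpow_add₀ hq0, map_mul, T_add]
  ring
/-- `[a*_n(l), x*_n⁺(k)] = ([2l]_t/l) x*_n⁺(k+l)` in `M_{2n+1}(R)`. -/
theorem asB_xpsB_comm (n : ℕ) (hn : 2 ≤ n) (k l : ℤ) (hl : l ≠ 0) :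
    asB n l * xpsB n k - xpsB n k * asB n l =
      C (qit (2 * l) / (l : F)) • xpsB n (k + l) := by
  have h1 : E (2*n+1) (n+1) (n+1) * E (2*n+1) (n+1) n = E (2*n+1) (n+1) n := E_mul_of_eq (by omega) (by omega)
  have h2 : E (2*n+1) (n+2) (n+2) * E (2*n+1) (n+2) (n+1) = E (2*n+1) (n+2) (n+1) := E_mul_of_eq (by omega) (by omega)
  have h3 : E (2*n+1) (n+1) n * E (2*n+1) n n = E (2*n+1) (n+1) n := E_mul_of_eq (by omega) (by omega)
  have h4 : E (2*n+1) (n+2) (n+1) * E (2*n+1) (n+1) (n+1) = E (2*n+1) (n+2) (n+1) := E_mul_of_eq (by omega) (by omega)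
  have z1 : E (2*n+1) n n * E (2*n+1) (n+1) n = 0 := E_mul_of_ne (by omega)
  have z2 : E (2*n+1) (n+2) (n+2) * E (2*n+1) (n+1) n = 0 := E_mul_of_ne (by omega)
  have z3 : E (2*n+1) (n+1) (n+1) * E (2*n+1) (n+2) (n+1) = 0 := E_mul_of_ne (by omega)
  have z4 : E (2*n+1) n n * E (2*n+1) (n+2) (n+1) = 0 := E_mul_of_ne (by omega)
  have z5 : E (2*n+1) (n+1) n * E (2*n+1) (n+1) (n+1) = 0 := E_mul_of_ne (by omega)
  have z6 : E (2*n+1) (n+1) n * E (2*n+1) (n+2) (n+2) = 0 := E_mul_of_ne (by omega)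
  have z7 : E (2*n+1) (n+2) (n+1) * E (2*n+1) n n = 0 := E_mul_of_ne (by omega)
  have z8 : E (2*n+1) (n+2) (n+1) * E (2*n+1) (n+2) (n+2) = 0 := E_mul_of_ne (by omega)
  simp only [asB, xpsB, Matrix.smul_mul, Matrix.mul_smul, Matrix.add_mul, Matrix.mul_add,
    Matrix.sub_mul, Matrix.mul_sub, h1, h2, h3, h4, z1, z2, z3, z4, z5, z6, z7, z8,
    smul_smul, smul_zero, smul_add, smul_sub, sub_zero, zero_sub, mul_zero, zero_mul]
  have e0 : zq (-(n:ℤ)+1) l * LaurentPolynomial.C (q ^ (-l)) = zq (-(n:ℤ)) l := by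
    simp only [zq]
    rw [mul_right_comm, ← map_mul, ← zpow_add₀ hq0,
      show (-(n:ℤ)+1)*l + (-l) = -(n:ℤ)*l by ring]
  have e1 : zq (-(n:ℤ)) (k + l) = zq (-(n:ℤ)+1) l * LaurentPolynomial.C (q ^ (-l)) * zq (-(n:ℤ)) k := by
    rw [e0, mul_comm, zq_mul]
  have e2 : zq (-(n:ℤ)+1) (k + l) = zq (-(n:ℤ)+1) l * zq (-(n:ℤ)+1) k := by
    rw [zq_mul, add_comm k l]
  rw [e1, e2]
  rw [← sub_eq_zero]
  simp only [smul_neg, neg_smul, smul_smul, zero_add, add_zero, sub_zero, zero_sub, sub_neg_eq_add, neg_neg]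
  refine Matrix.ext fun i j => ?_
  simp only [Matrix.add_apply, Matrix.sub_apply, Matrix.smul_apply, Matrix.neg_apply,
    Matrix.zero_apply, smul_eq_mul, E, Matrix.of_apply, mul_ite, mul_one, mul_zero]
  split_ifs <;> ring
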